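/- arXiv:2003.03086 — 3 statements merged into one kernel-verified Lean document; each statement's English description precedes it below -/
import Mathlib

section
/- Let A ∈ (-1,1) \ {0} and s > 0. Then ∑_{j∈ℤ} sin(π|j+A|) e^{-s|j+A|} e^{i j φ} = sin(|A|π) e^{-|A| s} + sin(Aπ) · [ (e^{-s} - cos(φ+π)) sinh(A s) + i sin(φ+π) cosh(A s) ] / [ cosh(s) - cos(φ+π) ], for every φ ∈ ℝ (the denominator cosh(s) - cos(φ+π) is nonzero since s > 0). -/
open Real in
set_option maxHeartbeats 1600000 in
theorem stmt5 (A s φ : ℝ) (hA : A ∈ Set.Ioo (-1 : ℝ) 1) (hA0 : A ≠ 0) (hs : 0 < s) :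
    HasSum (fun j : ℤ =>
      ((Real.sin (π * |(j : ℝ) + A|) * Real.exp (-s * |(j : ℝ) + A|) : ℝ) : ℂ) *
        Complex.exp (Complex.I * (j : ℂ) * (φ : ℂ)))
      (((Real.sin (|A| * π) * Real.exp (-|A| * s) : ℝ) : ℂ) +
        ((Real.sin (A * π) : ℝ) : ℂ) *
          ((((Real.exp (-s) - Real.cos (φ + π)) * Real.sinh (A * s) : ℝ) : ℂ) +
              Complex.I * ((Real.sin (φ + π) * Real.cosh (A * s) : ℝ) : ℂ)) /
            ((Real.cosh s - Real.cos (φ + π) : ℝ) : ℂ)) := by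
  obtain ⟨hA1, hA2⟩ := hA
  set f : ℤ → ℂ := fun j =>
      ((Real.sin (π * |(j : ℝ) + A|) * Real.exp (-s * |(j : ℝ) + A|) : ℝ) : ℂ) *
        Complex.exp (Complex.I * (j : ℂ) * (φ : ℂ)) with hf
  set u : ℂ := Complex.exp ((φ : ℂ) * Complex.I) with hu
  set U : ℂ := Complex.exp (((-φ : ℝ) : ℂ) * Complex.I) with hU
  have hu0 : u ≠ 0 := Complex.exp_ne_zero _
  have hU0 : U ≠ 0 := Complex.exp_ne_zero _
  have hunorm : ‖u‖ = 1 := by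
    rw [hu, Complex.norm_exp_ofReal_mul_I]
  have hUnorm : ‖U‖ = 1 := by
    rw [hU, Complex.norm_exp_ofReal_mul_I]
  set q : ℝ := Real.exp (-s) with hqdef
  have hq0 : 0 < q := Real.exp_pos _
  have hq1 : q < 1 := Real.exp_lt_one_iff.mpr (by linarith)
  set z : ℂ := -(q : ℂ) * u with hzdef
  set w : ℂ := -(q : ℂ) * U with hwdef
  have hz : ‖z‖ < 1 := by
    rw [hzdef, norm_mul, norm_neg, Complex.norm_real, hunorm, Real.norm_eq_abs,
      abs_of_pos hq0, mul_one]
    exact hq1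
  have hw : ‖w‖ < 1 := by
    rw [hwdef, norm_mul, norm_neg, Complex.norm_real, hUnorm, Real.norm_eq_abs,
      abs_of_pos hq0, mul_one]
    exact hq1
  have h1z : (1 : ℂ) - z ≠ 0 := by
    intro h
    have : z = 1 := by linear_combination -h
    rw [this] at hz; simp at hz
  have h1w : (1 : ℂ) - w ≠ 0 := by
    intro h
    have : w = 1 := by linear_combination -h
    rw [this] at hw; simp at hw
  set c1 : ℂ := (Real.sin (A * π) : ℂ) * (Real.exp (-(A * s)) : ℂ) with hc1
  set c2 : ℂ := -((Real.sin (A * π) : ℂ)) * (Real.exp (A * s) : ℂ) with hc2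
  -- key pointwise formulas
  have key1 : ∀ n : ℕ, f ((n : ℤ) + 1) = c1 * z ^ (n + 1) := by
    intro n
    have hn : (0 : ℝ) ≤ (n : ℝ) := n.cast_nonneg
    have habs : |(((n : ℤ) + 1 : ℤ) : ℝ) + A| = (n : ℝ) + 1 + A := by
      push_cast
      exact abs_of_pos (by linarith)
    have hsin : Real.sin (π * ((n : ℝ) + 1 + A)) = (-1) ^ (n + 1) * Real.sin (A * π) := by
      rw [show π * ((n : ℝ) + 1 + A) = A * π + ((n + 1 : ℕ) : ℝ) * π by push_cast; ring,
        Real.sin_add_nat_mul_pi]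
    have hexp : Real.exp (-s * ((n : ℝ) + 1 + A))
        = Real.exp (-(A * s)) * (Real.exp (-s)) ^ (n + 1) := by
      rw [← Real.exp_nat_mul, ← Real.exp_add]
      congr 1
      push_cast; ring
    have hcexp : Complex.exp (Complex.I * (((n : ℤ) + 1 : ℤ) : ℂ) * (φ : ℂ))
        = u ^ (n + 1) := by
      rw [show Complex.I * (((n : ℤ) + 1 : ℤ) : ℂ) * (φ : ℂ)
          = ((n + 1 : ℕ) : ℂ) * ((φ : ℂ) * Complex.I) by push_cast; ring,
        Complex.exp_nat_mul, hu]
    rw [hf]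
    simp only
    rw [habs, hsin, hexp, hcexp, hc1, hzdef, hqdef]
    push_cast
    ring
  have key2 : ∀ n : ℕ, f (-((n : ℤ) + 1)) = c2 * w ^ (n + 1) := by
    intro n
    have hn : (0 : ℝ) ≤ (n : ℝ) := n.cast_nonneg
    have habs : |((-((n : ℤ) + 1) : ℤ) : ℝ) + A| = (n : ℝ) + 1 - A := by
      push_cast
      rw [abs_of_neg (by linarith)]
      ring
    have hsin : Real.sin (π * ((n : ℝ) + 1 - A)) = -((-1) ^ (n + 1) * Real.sin (A * π)) := by
      rw [show π * ((n : ℝ) + 1 - A) = -(A * π) + ((n + 1 : ℕ) : ℝ) * π by push_cast; ring,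
        Real.sin_add_nat_mul_pi, Real.sin_neg]
      ring
    have hexp : Real.exp (-s * ((n : ℝ) + 1 - A))
        = Real.exp (A * s) * (Real.exp (-s)) ^ (n + 1) := by
      rw [← Real.exp_nat_mul, ← Real.exp_add]
      congr 1
      push_cast; ring
    have hcexp : Complex.exp (Complex.I * ((-((n : ℤ) + 1) : ℤ) : ℂ) * (φ : ℂ))
        = U ^ (n + 1) := by
      rw [show Complex.I * ((-((n : ℤ) + 1) : ℤ) : ℂ) * (φ : ℂ)
          = ((n + 1 : ℕ) : ℂ) * (((-φ : ℝ) : ℂ) * Complex.I) by push_cast; ring,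
        Complex.exp_nat_mul, hU]
    rw [hf]
    simp only
    rw [habs, hsin, hexp, hcexp, hc2, hwdef, hqdef]
    push_cast
    ring
  -- geometric sums
  have hgz : HasSum (fun n : ℕ => f ((n : ℤ) + 1)) (c1 * z * (1 - z)⁻¹) := by
    have h := (hasSum_geometric_of_norm_lt_one hz).mul_left (c1 * z)
    convert h using 1
    · rfl
    funext n
    rw [key1 n]
    ring
  have hgw : HasSum (fun n : ℕ => f (-((n : ℤ) + 1))) (c2 * w * (1 - w)⁻¹) := by
    have h := (hasSum_geometric_of_norm_lt_one hw).mul_left (c2 * w)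
    convert h using 1
    · rfl
    funext n
    rw [key2 n]
    ring
  have hpos : HasSum (fun n : ℕ => f (n : ℤ)) (c1 * z * (1 - z)⁻¹ + f 0) := by
    have h1' : HasSum (fun n : ℕ => f (((n + 1 : ℕ) : ℤ))) (c1 * z * (1 - z)⁻¹) := by
      convert hgz using 1
      funext n
      simp
    have := (hasSum_nat_add_iff (f := fun n : ℕ => f (n : ℤ)) 1).mp h1'
    simpa using this
  have htot := hpos.of_nat_of_neg_add_one hgw
  convert htot using 1
  -- the value equality
  have hf0 : f 0 = (Real.sin (π * |A|) : ℂ) * (Real.exp (-s * |A|) : ℂ) := by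
    rw [hf]; push_cast; simp
  have hden : ((Real.cosh s - Real.cos (φ + π) : ℝ) : ℂ) ≠ 0 := by
    rw [Complex.ofReal_ne_zero]
    have h1 : 1 < Real.cosh s := Real.one_lt_cosh.mpr (by linarith)
    have h2 : Real.cos (φ + π) ≤ 1 := Real.cos_le_one _
    intro h; linarith [sub_eq_zero.mp h ▸ (by linarith : Real.cos (φ + π) < Real.cosh s)]
  have huU : u * U = 1 := by
    rw [hu, hU, ← Complex.exp_add,
      show (φ:ℂ) * Complex.I + ((-φ : ℝ):ℂ) * Complex.I = 0 by push_cast; ring,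
      Complex.exp_zero]
  have hQE : Complex.exp (-(s:ℂ)) * Complex.exp (s:ℂ) = 1 := by
    rw [← Complex.exp_add]; simp
  have hRR : Complex.exp (-((A:ℂ)*(s:ℂ))) * Complex.exp ((A:ℂ)*(s:ℂ)) = 1 := by
    rw [← Complex.exp_add]; simp
  have hII : Complex.I * Complex.I = -1 := Complex.I_mul_I
  have hcosφ : Complex.cos (φ : ℂ) = (u + U) / 2 := by
    simp only [Complex.cos]
    rw [show (-(φ:ℂ)) * Complex.I = ((-φ : ℝ):ℂ) * Complex.I by push_cast; ring, ← hu, ← hU]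
  have hsinφ : Complex.sin (φ : ℂ) = (U - u) * Complex.I / 2 := by
    simp only [Complex.sin]
    rw [show (-(φ:ℂ)) * Complex.I = ((-φ : ℝ):ℂ) * Complex.I by push_cast; ring, ← hu, ← hU]
  have main : c1 * z * (1 - z)⁻¹ + c2 * w * (1 - w)⁻¹ =
      ((Real.sin (A * π) : ℝ) : ℂ) *
          ((((q - Real.cos (φ + π)) * Real.sinh (A * s) : ℝ) : ℂ) +
              Complex.I * ((Real.sin (φ + π) * Real.cosh (A * s) : ℝ) : ℂ)) /
            ((Real.cosh s - Real.cos (φ + π) : ℝ) : ℂ) := by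
    simp only [← div_eq_mul_inv]
    rw [div_add_div _ _ h1z h1w, div_eq_div_iff (mul_ne_zero h1z h1w) hden]
    rw [Real.cos_add_pi, Real.sin_add_pi]
    simp only [hc1, hc2, hzdef, hwdef, hqdef]
    push_cast
    rw [hcosφ, hsinφ]
    simp only [Complex.cosh, Complex.sinh]
    linear_combination ((-1/2 : ℂ) * (Complex.exp (-(s:ℂ)))^2 * (Complex.exp (s:ℂ)) * (Complex.exp (-((A:ℂ)*(s:ℂ)))) * (Complex.sin ((A:ℂ)*(π:ℂ))) + (1/2 : ℂ) * (Complex.exp (-(s:ℂ)))^2 * (Complex.exp (s:ℂ)) * (Complex.exp ((A:ℂ)*(s:ℂ))) * (Complex.sin ((A:ℂ)*(π:ℂ))) + (-1/4 : ℂ) * U * (Complex.exp (-(s:ℂ)))^2 * (Complex.exp (-((A:ℂ)*(s:ℂ)))) * (Complex.sin ((A:ℂ)*(π:ℂ))) + (1/4 : ℂ) * U * (Complex.exp (-(s:ℂ)))^2 * (Complex.exp (-((A:ℂ)*(s:ℂ)))) * Complex.I^2 * (Complex.sin ((A:ℂ)*(π:ℂ))) + (1/4 : ℂ) * U * (Complex.exp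 (-(s:ℂ)))^2 * (Complex.exp ((A:ℂ)*(s:ℂ))) * (Complex.sin ((A:ℂ)*(π:ℂ))) + (1/4 : ℂ) * U * (Complex.exp (-(s:ℂ)))^2 * (Complex.exp ((A:ℂ)*(s:ℂ))) * Complex.I^2 * (Complex.sin ((A:ℂ)*(π:ℂ))) + (-1/4 : ℂ) * u * (Complex.exp (-(s:ℂ)))^2 * (Complex.exp (-((A:ℂ)*(s:ℂ)))) * (Complex.sin ((A:ℂ)*(π:ℂ))) + (-1/4 : ℂ) * u * (Complex.exp (-(s:ℂ)))^2 * (Complex.exp (-((A:ℂ)*(s:ℂ)))) * Complex.I^2 * (Complex.sin ((A:ℂ)*(π:ℂ))) + (1/4 : ℂ) * u * (Complex.exp (-(s:ℂ)))^2 * (Complex.exp ((A:ℂ)*(s:ℂ))) * (Complex.sin ((A:ℂ)*(π:ℂ))) + (-1/4 : ℂ) * u * (Complex.exp (-(s:ℂ)))^2 * (Complex.exp ((A:ℂ)*(s:ℂ))) * Complex.I^2 * (Complex.sin ((A:ℂ)*(π:ℂ)))) * huU + ((-1/2 : ℂ) * (Complex.exp (-(s:ℂ))) * (Complex.exp (-((A:ℂ)*(s:ℂ))))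 * (Complex.sin ((A:ℂ)*(π:ℂ))) + (1/2 : ℂ) * (Complex.exp (-(s:ℂ))) * (Complex.exp ((A:ℂ)*(s:ℂ))) * (Complex.sin ((A:ℂ)*(π:ℂ))) + (1/2 : ℂ) * U * (Complex.exp ((A:ℂ)*(s:ℂ))) * (Complex.sin ((A:ℂ)*(π:ℂ))) + (-1/2 : ℂ) * u * (Complex.exp (-((A:ℂ)*(s:ℂ)))) * (Complex.sin ((A:ℂ)*(π:ℂ)))) * hQE + (0) * hRR + ((1/4 : ℂ) * U * (Complex.exp (-((A:ℂ)*(s:ℂ)))) * (Complex.sin ((A:ℂ)*(π:ℂ))) + (1/4 : ℂ) * U * (Complex.exp ((A:ℂ)*(s:ℂ))) * (Complex.sin ((A:ℂ)*(π:ℂ))) + (1/4 : ℂ) * U * (Complex.exp (-(s:ℂ)))^2 * (Complex.exp (-((A:ℂ)*(s:ℂ)))) * (Complex.sin ((A:ℂ)*(π:ℂ))) + (1/4 : ℂ) * U * (Complex.exp (-(s:ℂ)))^2 * (Complex.exp ((A:ℂ)*(s:ℂ))) * (Complex.sin ((A:ℂ)*(π:ℂ))) + (1/4 : ℂ) * U^2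 * (Complex.exp (-(s:ℂ))) * (Complex.exp (-((A:ℂ)*(s:ℂ)))) * (Complex.sin ((A:ℂ)*(π:ℂ))) + (1/4 : ℂ) * U^2 * (Complex.exp (-(s:ℂ))) * (Complex.exp ((A:ℂ)*(s:ℂ))) * (Complex.sin ((A:ℂ)*(π:ℂ))) + (-1/4 : ℂ) * u * (Complex.exp (-((A:ℂ)*(s:ℂ)))) * (Complex.sin ((A:ℂ)*(π:ℂ))) + (-1/4 : ℂ) * u * (Complex.exp ((A:ℂ)*(s:ℂ))) * (Complex.sin ((A:ℂ)*(π:ℂ))) + (-1/4 : ℂ) * u * (Complex.exp (-(s:ℂ)))^2 * (Complex.exp (-((A:ℂ)*(s:ℂ)))) * (Complex.sin ((A:ℂ)*(π:ℂ))) + (-1/4 : ℂ) * u * (Complex.exp (-(s:ℂ)))^2 * (Complex.exp ((A:ℂ)*(s:ℂ))) * (Complex.sin ((A:ℂ)*(π:ℂ))) + (-1/4 : ℂ) * u^2 * (Complex.exp (-(s:ℂ))) * (Complex.exp (-((A:ℂ)*(s:ℂ)))) * (Complex.sin ((A:ℂ)*(π:ℂ))) + (-1/4 : ℂ) * u^2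 * (Complex.exp (-(s:ℂ))) * (Complex.exp ((A:ℂ)*(s:ℂ))) * (Complex.sin ((A:ℂ)*(π:ℂ)))) * hII
  rw [hf0, show Real.sin (|A| * π) = Real.sin (π * |A|) by rw [mul_comm],
      show Real.exp (-|A| * s) = Real.exp (-s * |A|) by rw [show -|A| * s = -s * |A| by ring]]
  push_cast at main ⊢
  linear_combination -main
end

section
/- Suppose φ: (a,b) → ℝ is smooth with |φ''(x)| ≥ 1 on (a,b), and ψ: [a,b] → ℂ is C¹. Then |∫_a^b e^{iλφ(x)} ψ(x) dx| ≤ c₂ λ^{-1/2} (|ψ(b)| + ∫_a^b |ψ'(x)| dx) for all λ > 0, where c₂ is an absolute constant. -/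
open Set MeasureTheory intervalIntegral Topology

noncomputable section

lemma vdc_norm_exp {lam t : ℝ} : ‖Complex.exp (Complex.I * lam * t)‖ = 1 := by
  rw [Complex.norm_exp]
  simp

lemma vdc1 {a b : ℝ} {φ : ℝ → ℝ} (hφ : ContDiffOn ℝ (⊤ : ℕ∞) φ (Set.Ioo a b))
    (h2 : ∀ x ∈ Set.Ioo a b, (1:ℝ) ≤ deriv (deriv φ) x)
    {lam μ c d : ℝ} (hlam : 0 < lam) (hμ : 0 < μ) (hcd : c ≤ d)
    (hsub : Set.Icc c d ⊆ Set.Ioo a b)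
    (hmono : deriv φ c ≤ deriv φ d)
    (hsgn : (∀ x ∈ Set.Icc c d, μ ≤ deriv φ x) ∨ (∀ x ∈ Set.Icc c d, deriv φ x ≤ -μ)) :
    ‖∫ x in c..d, Complex.exp (Complex.I * lam * φ x)‖ ≤ 3 / (lam * μ) := by
  have hopen : IsOpen (Set.Ioo a b) := isOpen_Ioo
  have hφ' : ContDiffOn ℝ (⊤ : ℕ∞) (deriv φ) (Set.Ioo a b) :=
    hφ.deriv_of_isOpen hopen (by simp)
  have hφ'' : ContDiffOn ℝ (⊤ : ℕ∞) (deriv (deriv φ)) (Set.Ioo a b) :=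
    hφ'.deriv_of_isOpen hopen (by simp)
  have hdφ : ∀ x ∈ Set.Ioo a b, HasDerivAt φ (deriv φ x) x := fun x hx =>
    ((hφ.differentiableOn (by simp)).differentiableAt (hopen.mem_nhds hx)).hasDerivAt
  have hdφ' : ∀ x ∈ Set.Ioo a b, HasDerivAt (deriv φ) (deriv (deriv φ) x) x := fun x hx =>
    ((hφ'.differentiableOn (by simp)).differentiableAt (hopen.mem_nhds hx)).hasDerivAt
  have hcφ : ContinuousOn φ (Set.Icc c d) := (hφ.continuousOn).mono hsub
  have hcφ' : ContinuousOn (deriv φ) (Set.Icc c d) := (hφ'.continuousOn).mono hsub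
  have hcφ'' : ContinuousOn (deriv (deriv φ)) (Set.Icc c d) := (hφ''.continuousOn).mono hsub
  have hlam' : (lam:ℂ) ≠ 0 := by exact_mod_cast hlam.ne'
  have hne : ∀ x ∈ Set.Icc c d, deriv φ x ≠ 0 := by
    intro x hx
    rcases hsgn with h | h
    · exact (lt_of_lt_of_le hμ (h x hx)).ne'
    · exact (lt_of_le_of_lt (h x hx) (by linarith)).ne
  have habs : ∀ x ∈ Set.Icc c d, μ ≤ |deriv φ x| := by
    intro x hx
    rcases hsgn with h | h
    · rw [abs_of_pos (lt_of_lt_of_le hμ (h x hx))]; exact h x hx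
    · rw [abs_of_neg (lt_of_le_of_lt (h x hx) (by linarith))]; linarith [h x hx]
  set g : ℝ → ℂ := fun x => Complex.exp (Complex.I * lam * φ x) with hg_def
  have hgnorm : ∀ x, ‖g x‖ = 1 := fun x => vdc_norm_exp
  set H : ℝ → ℂ := fun x => g x / (Complex.I * lam * (Complex.ofReal (deriv φ x))) with hH_def
  set H' : ℝ → ℂ := fun x =>
    g x - g x * (Complex.ofReal (deriv (deriv φ) x)) / (Complex.I * lam * (Complex.ofReal (deriv φ x))^2) with hH'_def
  set R : ℝ → ℂ := fun x =>
    g x * (Complex.ofReal (deriv (deriv φ) x)) / (Complex.I * lam * (Complex.ofReal (deriv φ x))^2) with hR_def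
  have hden : ∀ x ∈ Set.Icc c d, Complex.I * lam * (Complex.ofReal (deriv φ x)) ≠ 0 := by
    intro x hx
    have : (Complex.ofReal (deriv φ x)) ≠ 0 := by exact_mod_cast hne x hx
    exact mul_ne_zero (mul_ne_zero Complex.I_ne_zero hlam') this
  have hgd : ∀ x ∈ Set.Ioo a b, HasDerivAt g (Complex.I * lam * (Complex.ofReal (deriv φ x)) * g x) x := by
    intro x hx
    have h1 : HasDerivAt (fun y => Complex.I * lam * (Complex.ofReal (φ y)))
        (Complex.I * lam * (Complex.ofReal (deriv φ x))) x := (hdφ x hx).ofReal_comp.const_mul _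
    have := h1.cexp
    simpa [hg_def, mul_comm] using this
  have hH : ∀ x ∈ Set.Icc c d, HasDerivAt H (H' x) x := by
    intro x hx
    have hx' := hsub hx
    have hb : HasDerivAt (fun y => Complex.I * lam * (Complex.ofReal (deriv φ y)))
        (Complex.I * lam * (Complex.ofReal (deriv (deriv φ) x))) x := (hdφ' x hx').ofReal_comp.const_mul _
    have := (hgd x hx').div hb (hden x hx)
    refine this.congr_deriv ?_
    have h0 : (Complex.ofReal (deriv φ x)) ≠ 0 := by exact_mod_cast hne x hx
    simp only [hH'_def]
    field_simp
  have hcg : ContinuousOn g (Set.Icc c d) :=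
    Complex.continuous_exp.comp_continuousOn
      ((continuous_const.continuousOn).mul (Complex.continuous_ofReal.comp_continuousOn hcφ))
  have hcH' : ContinuousOn H' (Set.Icc c d) := by
    apply hcg.sub
    apply ContinuousOn.div
    · exact hcg.mul (Complex.continuous_ofReal.comp_continuousOn hcφ'')
    · exact (continuous_const.continuousOn).mul
        ((Complex.continuous_ofReal.comp_continuousOn hcφ').pow 2)
    · intro x hx
      have h0 : (Complex.ofReal (deriv φ x)) ≠ 0 := by exact_mod_cast hne x hx
      exact mul_ne_zero (mul_ne_zero Complex.I_ne_zero hlam') (pow_ne_zero 2 h0)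
  have hcR : ContinuousOn R (Set.Icc c d) := by
    apply ContinuousOn.div
    · exact hcg.mul (Complex.continuous_ofReal.comp_continuousOn hcφ'')
    · exact (continuous_const.continuousOn).mul
        ((Complex.continuous_ofReal.comp_continuousOn hcφ').pow 2)
    · intro x hx
      have h0 : (Complex.ofReal (deriv φ x)) ≠ 0 := by exact_mod_cast hne x hx
      exact mul_ne_zero (mul_ne_zero Complex.I_ne_zero hlam') (pow_ne_zero 2 h0)
  have hH'i : IntervalIntegrable H' volume c d := by
    apply ContinuousOn.intervalIntegrable
    rwa [Set.uIcc_of_le hcd]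
  have hRi : IntervalIntegrable R volume c d := by
    apply ContinuousOn.intervalIntegrable
    rwa [Set.uIcc_of_le hcd]
  have key1 : ∫ x in c..d, H' x = H d - H c := by
    apply integral_eq_sub_of_hasDerivAt
    · intro x hx
      exact hH x (by rwa [Set.uIcc_of_le hcd] at hx)
    · exact hH'i
  have hsplit : (∫ x in c..d, g x) = (∫ x in c..d, H' x) + ∫ x in c..d, R x := by
    rw [← integral_add hH'i hRi]
    apply integral_congr
    intro x hx
    simp only [hH'_def, hR_def]
    ring
  have hHnorm : ∀ x ∈ Set.Icc c d, ‖H x‖ ≤ 1 / (lam * μ) := by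
    intro x hx
    have h1 : ‖Complex.I * lam * Complex.ofReal (deriv φ x)‖ = lam * |deriv φ x| := by
      simp [Complex.norm_real, abs_of_pos hlam]
    have : ‖H x‖ = 1 / (lam * |deriv φ x|) := by
      rw [hH_def]; dsimp only; rw [norm_div, hgnorm, h1]
    rw [this]
    apply one_div_le_one_div_of_le (by positivity)
    exact mul_le_mul_of_nonneg_left (habs x hx) hlam.le
  have hRnorm : ∀ x ∈ Set.Icc c d, ‖R x‖ = deriv (deriv φ) x / (lam * (deriv φ x)^2) := by
    intro x hx
    have h2x : (1:ℝ) ≤ deriv (deriv φ) x := h2 x (hsub hx)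
    rw [hR_def]; dsimp only
    rw [norm_div, norm_mul, hgnorm, one_mul]
    simp [Complex.norm_real,
      abs_of_pos hlam, map_pow, abs_of_nonneg (by linarith : (0:ℝ) ≤ deriv (deriv φ) x), sq_abs]
  have hP : ∀ x ∈ Set.Icc c d, HasDerivAt (fun y => -(lam * deriv φ y)⁻¹)
      (deriv (deriv φ) x / (lam * (deriv φ x)^2)) x := by
    intro x hx
    have hf : HasDerivAt (fun y => lam * deriv φ y) (lam * deriv (deriv φ) x) x :=
      (hdφ' x (hsub hx)).const_mul _
    have h0 : lam * deriv φ x ≠ 0 := mul_ne_zero hlam.ne' (hne x hx)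
    have := (hf.inv h0).neg
    refine this.congr_deriv ?_
    have hl0 : lam ≠ 0 := hlam.ne'
    have hx0 : deriv φ x ≠ 0 := hne x hx
    field_simp
  have hcP' : ContinuousOn (fun x => deriv (deriv φ) x / (lam * (deriv φ x)^2))
      (Set.Icc c d) := by
    apply hcφ''.div ((continuous_const.continuousOn).mul (hcφ'.pow 2))
    intro x hx
    exact mul_ne_zero hlam.ne' (pow_ne_zero 2 (hne x hx))
  have hP'i : IntervalIntegrable (fun x => deriv (deriv φ) x / (lam * (deriv φ x)^2))
      volume c d := by
    apply ContinuousOn.intervalIntegrable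
    rwa [Set.uIcc_of_le hcd]
  have key2 : (∫ x in c..d, deriv (deriv φ) x / (lam * (deriv φ x)^2))
      = 1/(lam * deriv φ c) - 1/(lam * deriv φ d) := by
    rw [integral_eq_sub_of_hasDerivAt (fun x hx => hP x (by rwa [Set.uIcc_of_le hcd] at hx)) hP'i]
    rw [one_div, one_div]
    ring
  have hJ : 1/(lam * deriv φ c) - 1/(lam * deriv φ d) ≤ 1/(lam*μ) := by
    rcases hsgn with h | h
    · have hc := h c ⟨le_refl c, hcd⟩
      have hd := h d ⟨hcd, le_refl d⟩
      have hdpos : 0 < lam * deriv φ d := by nlinarith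
      have h1 : 1/(lam * deriv φ c) ≤ 1/(lam*μ) :=
        one_div_le_one_div_of_le (by positivity) (by nlinarith)
      have h2 : 0 ≤ 1/(lam * deriv φ d) := by positivity
      linarith
    · have hc := h c ⟨le_refl c, hcd⟩
      have hd := h d ⟨hcd, le_refl d⟩
      have hcneg : lam * deriv φ c < 0 := by nlinarith
      have h1 : 1/(lam * deriv φ c) ≤ 0 := by
        apply div_nonpos_of_nonneg_of_nonpos <;> linarith
      have h2 : -(1/(lam * deriv φ d)) ≤ 1/(lam*μ) := by
        have he : -(1/(lam * deriv φ d)) = 1/(lam * -deriv φ d) := by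
          rw [mul_neg, ← one_div_neg_eq_neg_one_div]
        rw [he]
        exact one_div_le_one_div_of_le (by positivity) (by nlinarith)
      linarith
  have hRbound : ‖∫ x in c..d, R x‖ ≤ 1/(lam*μ) := by
    refine le_trans (norm_integral_le_integral_norm hcd) ?_
    have hRint : (∫ x in c..d, ‖R x‖)
        = ∫ x in c..d, deriv (deriv φ) x / (lam * (deriv φ x)^2) := by
      apply integral_congr
      intro x hx
      exact hRnorm x (by rwa [Set.uIcc_of_le hcd] at hx)
    rw [hRint, key2]
    exact hJ
  calc ‖∫ x in c..d, g x‖ = ‖(H d - H c) + ∫ x in c..d, R x‖ := by rw [hsplit, key1]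
    _ ≤ ‖H d - H c‖ + ‖∫ x in c..d, R x‖ := norm_add_le _ _
    _ ≤ (‖H d‖ + ‖H c‖) + ‖∫ x in c..d, R x‖ := by
        have := norm_sub_le (H d) (H c); linarith
    _ ≤ (1/(lam*μ) + 1/(lam*μ)) + 1/(lam*μ) := by
        have h1 := hHnorm d ⟨hcd, le_refl d⟩
        have h2 := hHnorm c ⟨le_refl c, hcd⟩
        linarith
    _ = 3/(lam*μ) := by ring

lemma vdcA {a b : ℝ} {φ : ℝ → ℝ} (hφ : ContDiffOn ℝ (⊤ : ℕ∞) φ (Set.Ioo a b))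
    (h2 : ∀ x ∈ Set.Ioo a b, (1:ℝ) ≤ deriv (deriv φ) x)
    {lam c d : ℝ} (hlam : 0 < lam) (hac : a < c) (hcd : c ≤ d) (hdb : d < b) :
    ‖∫ x in c..d, Complex.exp (Complex.I * lam * φ x)‖ ≤ 8 * lam ^ (-(1/2) : ℝ) := by
  have hopen : IsOpen (Set.Ioo a b) := isOpen_Ioo
  have hφ' : ContDiffOn ℝ (⊤ : ℕ∞) (deriv φ) (Set.Ioo a b) := hφ.deriv_of_isOpen hopen (by simp)
  set δ : ℝ := lam ^ (-(1/2) : ℝ) with hδ_def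
  have hδ : 0 < δ := Real.rpow_pos_of_pos hlam _
  have hld : lam * δ = lam ^ ((1:ℝ)/2) := by
    rw [hδ_def]
    nth_rewrite 1 [← Real.rpow_one lam]
    rw [← Real.rpow_add hlam]
    norm_num
  have hδeq : δ = (lam ^ ((1:ℝ)/2))⁻¹ := by
    rw [hδ_def, ← Real.rpow_neg hlam.le]
  have h3δ : 3 / (lam * δ) = 3 * δ := by rw [hld, hδeq, div_eq_mul_inv]
  have hsub : Set.Icc c d ⊆ Set.Ioo a b := fun x hx =>
    ⟨lt_of_lt_of_le hac hx.1, lt_of_le_of_lt hx.2 hdb⟩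
  have hcφ' : ContinuousOn (deriv φ) (Set.Icc c d) := (hφ'.continuousOn).mono hsub
  have hintIoo : interior (Set.Icc c d) ⊆ Set.Ioo a b := by
    rw [interior_Icc]; exact (Set.Ioo_subset_Icc_self).trans hsub
  have hgrow : ∀ x ∈ Set.Icc c d, ∀ y ∈ Set.Icc c d, x ≤ y →
      y - x ≤ deriv φ y - deriv φ x := by
    have := (convex_Icc c d).mul_sub_le_image_sub_of_le_deriv hcφ'
      (fun x hx => (((hφ'.differentiableOn (by simp)).differentiableAt
        (hopen.mem_nhds (hintIoo hx)))).differentiableWithinAt)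
      (C := 1) (fun x hx => h2 x (hintIoo hx))
    intro x hx y hy hxy
    have := this x hx y hy hxy
    linarith
  have hmono : ∀ x ∈ Set.Icc c d, ∀ y ∈ Set.Icc c d, x ≤ y → deriv φ x ≤ deriv φ y := by
    intro x hx y hy hxy
    have h1 := hgrow x hx y hy hxy
    linarith
  set g : ℝ → ℂ := fun x => Complex.exp (Complex.I * lam * φ x) with hg_def
  have hcg : ContinuousOn g (Set.Icc c d) :=
    Complex.continuous_exp.comp_continuousOn
      ((continuous_const.continuousOn).mul
        (Complex.continuous_ofReal.comp_continuousOn ((hφ.continuousOn).mono hsub)))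
  have hgi : ∀ u v : ℝ, u ∈ Set.Icc c d → v ∈ Set.Icc c d →
      IntervalIntegrable g volume u v := by
    intro u v hu hv
    apply ContinuousOn.intervalIntegrable
    apply hcg.mono
    rw [← Set.uIcc_of_le hcd]
    exact Set.uIcc_subset_uIcc (by rwa [Set.uIcc_of_le hcd]) (by rwa [Set.uIcc_of_le hcd])
  set S : Set ℝ := Set.Icc c d ∩ deriv φ ⁻¹' (Set.Iic (-δ)) with hS_def
  set T : Set ℝ := Set.Icc c d ∩ deriv φ ⁻¹' (Set.Ici δ) with hT_def
  have hScl : IsClosed (insert c S) := by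
    rw [Set.insert_eq]
    exact isClosed_singleton.union (hcφ'.preimage_isClosed_of_isClosed isClosed_Icc isClosed_Iic)
  have hTcl : IsClosed (insert d T) := by
    rw [Set.insert_eq]
    exact isClosed_singleton.union (hcφ'.preimage_isClosed_of_isClosed isClosed_Icc isClosed_Ici)
  have hSsub : insert c S ⊆ Set.Icc c d := by
    intro x hx
    rcases hx with h | h
    · subst h; exact ⟨le_refl x, hcd⟩
    · exact h.1
  have hTsub : insert d T ⊆ Set.Icc c d := by
    intro x hx
    rcases hx with h | h
    · subst h; exact ⟨hcd, le_refl x⟩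
    · exact h.1
  set p : ℝ := sSup (insert c S) with hp_def
  set q : ℝ := sInf (insert d T) with hq_def
  have hSbdd : BddAbove (insert c S) := BddAbove.mono hSsub bddAbove_Icc
  have hTbdd : BddBelow (insert d T) := BddBelow.mono hTsub bddBelow_Icc
  have hpmem : p ∈ insert c S := hScl.csSup_mem (insert_nonempty _ _) hSbdd
  have hqmem : q ∈ insert d T := hTcl.csInf_mem (insert_nonempty _ _) hTbdd
  have hpIcc : p ∈ Set.Icc c d := hSsub hpmem
  have hqIcc : q ∈ Set.Icc c d := hTsub hqmem
  have hcp : c ≤ p := hpIcc.1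
  have hqd : q ≤ d := hqIcc.2
  have hSle : ∀ x ∈ S, x ≤ p := fun x hx => le_csSup hSbdd (Set.mem_insert_of_mem _ hx)
  have hTle : ∀ x ∈ T, q ≤ x := fun x hx => csInf_le hTbdd (Set.mem_insert_of_mem _ hx)
  have hpq : p ≤ q := by
    by_contra hqp
    push_neg at hqp
    have hcp' : c < p := lt_of_le_of_lt hqIcc.1 hqp
    have hqd' : q < d := lt_of_lt_of_le hqp hpIcc.2
    have hpS : p ∈ S := by
      rcases hpmem with h | h
      · exact absurd h.symm (ne_of_lt hcp')
      · exact h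
    have hqT : q ∈ T := by
      rcases hqmem with h | h
      · exact absurd h (ne_of_lt hqd')
      · exact h
    have := hmono q hqIcc p hpIcc hqp.le
    have h1 : deriv φ p ≤ -δ := hpS.2
    have h2' : δ ≤ deriv φ q := hqT.2
    linarith
  have hqp2 : q - p ≤ 2 * δ := by
    by_contra hcon
    push_neg at hcon
    set ε : ℝ := (q - p - 2*δ)/3 with hε_def
    have hε : 0 < ε := by rw [hε_def]; linarith
    set x : ℝ := p + ε with hx_def
    set y : ℝ := q - ε with hy_def
    have hxy : x ≤ y := by rw [hx_def, hy_def, hε_def]; linarith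
    have hxIcc : x ∈ Set.Icc c d := ⟨by linarith [hpIcc.1], by linarith [hqIcc.2]⟩
    have hyIcc : y ∈ Set.Icc c d := ⟨by linarith [hpIcc.1], by linarith [hqIcc.2]⟩
    have hxS : x ∉ S := fun h => by have := hSle x h; rw [hx_def] at this; linarith
    have hyT : y ∉ T := fun h => by have := hTle y h; rw [hy_def] at this; linarith
    have hx1 : -δ < deriv φ x := by
      by_contra h
      push_neg at h
      exact hxS ⟨hxIcc, h⟩
    have hy1 : deriv φ y < δ := by
      by_contra h
      push_neg at h
      exact hyT ⟨hyIcc, h⟩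
    have := hgrow x hxIcc y hyIcc hxy
    have hyx : y - x = q - p - 2*ε := by rw [hx_def, hy_def]; ring
    rw [hε_def] at hyx
    linarith
  have hleft : ‖∫ x in c..p, g x‖ ≤ 3 * δ := by
    rcases eq_or_lt_of_le hcp with h | h
    · rw [← h, integral_same]; simp; positivity
    · have hpS : p ∈ S := by
        rcases hpmem with h' | h'
        · exact absurd h'.symm (ne_of_lt h)
        · exact h'
      rw [← h3δ]
      apply vdc1 hφ h2 hlam hδ hcp (fun z hz => hsub ⟨hz.1, hz.2.trans hpIcc.2⟩)
      · exact hmono c ⟨le_refl c, hcd⟩ p hpIcc hcp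
      · right
        intro z hz
        have hz' : z ∈ Set.Icc c d := ⟨hz.1, hz.2.trans hpIcc.2⟩
        exact le_trans (hmono z hz' p hpIcc hz.2) hpS.2
  have hright : ‖∫ x in q..d, g x‖ ≤ 3 * δ := by
    rcases eq_or_lt_of_le hqd with h | h
    · rw [h, integral_same]; simp; positivity
    · have hqT : q ∈ T := by
        rcases hqmem with h' | h'
        · exact absurd h' (ne_of_lt h)
        · exact h'
      rw [← h3δ]
      apply vdc1 hφ h2 hlam hδ hqd (fun z hz => hsub ⟨hqIcc.1.trans hz.1, hz.2⟩)
      · exact hmono q hqIcc d ⟨hcd, le_refl d⟩ hqd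
      · left
        intro z hz
        have hz' : z ∈ Set.Icc c d := ⟨hqIcc.1.trans hz.1, hz.2⟩
        exact le_trans hqT.2 (hmono q hqIcc z hz' hz.1)
  have hmid : ‖∫ x in p..q, g x‖ ≤ 2 * δ := by
    have : ‖∫ x in p..q, g x‖ ≤ 1 * |q - p| := by
      apply intervalIntegral.norm_integral_le_of_norm_le_const
      intro x _
      exact le_of_eq (by rw [hg_def]; exact vdc_norm_exp)
    rw [one_mul, abs_of_nonneg (by linarith)] at this
    linarith
  have hsplit : (∫ x in c..d, g x)
      = (∫ x in c..p, g x) + (∫ x in p..q, g x) + (∫ x in q..d, g x) := by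
    rw [integral_add_adjacent_intervals (hgi c p ⟨le_refl c, hcd⟩ hpIcc)
      (hgi p q hpIcc hqIcc)]
    rw [integral_add_adjacent_intervals (hgi c q ⟨le_refl c, hcd⟩ hqIcc)
      (hgi q d hqIcc ⟨hcd, le_refl d⟩)]
  calc ‖∫ x in c..d, g x‖
      ≤ ‖∫ x in c..p, g x‖ + ‖∫ x in p..q, g x‖ + ‖∫ x in q..d, g x‖ := by
        rw [hsplit]; exact le_trans (norm_add_le _ _) (by gcongr; exact norm_add_le _ _)
    _ ≤ 3*δ + 2*δ + 3*δ := by gcongr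
    _ = 8 * δ := by ring
lemma vdcB {a b : ℝ} {φ : ℝ → ℝ} (hab : a < b) (hφ : ContDiffOn ℝ (⊤ : ℕ∞) φ (Set.Ioo a b))
    (h2 : ∀ x ∈ Set.Ioo a b, (1:ℝ) ≤ deriv (deriv φ) x)
    {lam : ℝ} (hlam : 0 < lam) :
    ∀ u ∈ Set.Icc a b,
      ‖∫ x in a..u, Complex.exp (Complex.I * lam * φ x)‖ ≤ 8 * lam ^ (-(1/2) : ℝ) := by
  set δ : ℝ := lam ^ (-(1/2) : ℝ) with hδ_def
  have hδ : 0 < δ := Real.rpow_pos_of_pos hlam _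
  set g : ℝ → ℂ := fun x => Complex.exp (Complex.I * lam * φ x) with hg_def
  have hgnorm : ∀ x, ‖g x‖ = 1 := fun x => vdc_norm_exp
  have hgab : IntervalIntegrable g volume a b := by
    rw [intervalIntegrable_iff_integrableOn_Ioo_of_le hab.le]
    constructor
    · exact (Complex.continuous_exp.comp_continuousOn
        ((continuous_const.continuousOn).mul
          (Complex.continuous_ofReal.comp_continuousOn hφ.continuousOn))).aestronglyMeasurable
        measurableSet_Ioo
    · exact HasFiniteIntegral.restrict_of_bounded (C := 1)
        (by simp [Real.volume_Ioo])
        (Filter.Eventually.of_forall fun x => le_of_eq (hgnorm x))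
  have hgi : ∀ u v : ℝ, u ∈ Set.Icc a b → v ∈ Set.Icc a b →
      IntervalIntegrable g volume u v := by
    intro u v hu hv
    apply hgab.mono_set
    rw [Set.uIcc_of_le hab.le]
    exact Set.uIcc_subset_Icc hu hv
  intro u hu
  rcases eq_or_lt_of_le hu.1 with h | hau
  · rw [← h, integral_same]; simp; positivity
  apply le_of_forall_pos_le_add
  intro ε hε
  set t : ℝ := min (ε/2) ((u-a)/2) with ht_def
  have ht : 0 < t := lt_min (by linarith) (by linarith)
  have ht2 : 2*t ≤ u - a := by
    have := min_le_right (ε/2) ((u-a)/2)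
    rw [ht_def]; linarith
  have htε : t ≤ ε/2 := min_le_left _ _
  set c : ℝ := a + t with hc_def
  set u' : ℝ := u - t with hu'_def
  have hac : a < c := by rw [hc_def]; linarith
  have hcu' : c ≤ u' := by rw [hc_def, hu'_def]; linarith
  have hu'b : u' < b := by rw [hu'_def]; have := hu.2; linarith
  have hcIcc : c ∈ Set.Icc a b := ⟨hac.le, by rw [hc_def]; have := hu.2; linarith⟩
  have hu'Icc : u' ∈ Set.Icc a b := ⟨by rw [hu'_def]; linarith, hu'b.le⟩
  have hmid : ‖∫ x in c..u', g x‖ ≤ 8 * δ := vdcA hφ h2 hlam hac hcu' hu'b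
  have hend1 : ‖∫ x in a..c, g x‖ ≤ t := by
    have : ‖∫ x in a..c, g x‖ ≤ 1 * |c - a| :=
      intervalIntegral.norm_integral_le_of_norm_le_const fun x _ => le_of_eq (hgnorm x)
    rw [one_mul, hc_def] at this
    simpa [abs_of_nonneg ht.le] using this
  have hend2 : ‖∫ x in u'..u, g x‖ ≤ t := by
    have : ‖∫ x in u'..u, g x‖ ≤ 1 * |u - u'| :=
      intervalIntegral.norm_integral_le_of_norm_le_const fun x _ => le_of_eq (hgnorm x)
    rw [one_mul, hu'_def] at this
    simpa [abs_of_nonneg ht.le] using this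
  have hsplit : (∫ x in a..u, g x)
      = (∫ x in a..c, g x) + (∫ x in c..u', g x) + (∫ x in u'..u, g x) := by
    rw [intervalIntegral.integral_add_adjacent_intervals (hgi a c ⟨le_refl a, hab.le⟩ hcIcc)
      (hgi c u' hcIcc hu'Icc)]
    rw [intervalIntegral.integral_add_adjacent_intervals (hgi a u' ⟨le_refl a, hab.le⟩ hu'Icc)
      (hgi u' u hu'Icc hu)]
  calc ‖∫ x in a..u, g x‖
      ≤ ‖∫ x in a..c, g x‖ + ‖∫ x in c..u', g x‖ + ‖∫ x in u'..u, g x‖ := by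
        rw [hsplit]; exact le_trans (norm_add_le _ _) (by gcongr; exact norm_add_le _ _)
    _ ≤ t + 8*δ + t := by gcongr
    _ ≤ 8 * δ + ε := by linarith
lemma vdcCore {a b : ℝ} {φ : ℝ → ℝ} {ψ : ℝ → ℂ} (hab : a < b)
    (hφ : ContDiffOn ℝ (⊤ : ℕ∞) φ (Set.Ioo a b))
    (h2 : ∀ x ∈ Set.Ioo a b, (1:ℝ) ≤ deriv (deriv φ) x)
    (hψ : ContDiffOn ℝ 1 ψ (Set.Icc a b))
    {lam : ℝ} (hlam : 0 < lam) :
    ‖∫ x in a..b, Complex.exp (Complex.I * lam * φ x) * ψ x‖ ≤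
      8 * lam ^ (-(1/2) : ℝ) * (‖ψ b‖ + ∫ x in a..b, ‖deriv ψ x‖) := by
  have hopen : IsOpen (Set.Ioo a b) := isOpen_Ioo
  set δ : ℝ := lam ^ (-(1/2) : ℝ) with hδ_def
  have hδ : 0 < δ := Real.rpow_pos_of_pos hlam _
  set g : ℝ → ℂ := fun x => Complex.exp (Complex.I * lam * φ x) with hg_def
  have hgnorm : ∀ x, ‖g x‖ = 1 := fun x => vdc_norm_exp
  have hcgIoo : ContinuousOn g (Set.Ioo a b) :=
    Complex.continuous_exp.comp_continuousOn
      ((continuous_const.continuousOn).mul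
        (Complex.continuous_ofReal.comp_continuousOn hφ.continuousOn))
  have hgm : AEStronglyMeasurable g (volume.restrict (Set.Ioo a b)) :=
    hcgIoo.aestronglyMeasurable measurableSet_Ioo
  have hgab : IntervalIntegrable g volume a b := by
    rw [intervalIntegrable_iff_integrableOn_Ioo_of_le hab.le]
    exact ⟨hgm, HasFiniteIntegral.restrict_of_bounded (C := 1)
        (by simp [Real.volume_Ioo])
        (Filter.Eventually.of_forall fun x => le_of_eq (hgnorm x))⟩
  set F : ℝ → ℂ := fun u => ∫ x in a..u, g x with hF_def
  have hFbound : ∀ u ∈ Set.Icc a b, ‖F u‖ ≤ 8 * δ := vdcB hab hφ h2 hlam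
  have hFc : ContinuousOn F (Set.Icc a b) := by
    have := continuousOn_primitive_interval' hgab (Set.left_mem_uIcc (a := a) (b := b))
    rwa [Set.uIcc_of_le hab.le] at this
  have hFd : ∀ x ∈ Set.Ioo a b, HasDerivAt F (g x) x := by
    intro x hx
    apply intervalIntegral.integral_hasDerivAt_right
      (hgab.mono_set ?_) ⟨Set.Ioo a b, hopen.mem_nhds hx, hgm⟩
      ((hcgIoo x hx).continuousAt (hopen.mem_nhds hx))
    rw [Set.uIcc_of_le hab.le]
    exact Set.uIcc_subset_Icc ⟨le_refl a, hab.le⟩ ⟨hx.1.le, hx.2.le⟩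
  set ψ' : ℝ → ℂ := fun x => derivWithin ψ (Set.Icc a b) x with hψ'_def
  have hψc : ContinuousOn ψ (Set.Icc a b) := hψ.continuousOn
  have hψ'c : ContinuousOn ψ' (Set.Icc a b) :=
    hψ.continuousOn_derivWithin (uniqueDiffOn_Icc hab) (le_refl 1)
  have hψd : ∀ x ∈ Set.Ioo a b, HasDerivAt ψ (ψ' x) x ∧ deriv ψ x = ψ' x := by
    intro x hx
    have hmem : Set.Icc a b ∈ 𝓝 x := Icc_mem_nhds hx.1 hx.2
    have hdw : DifferentiableWithinAt ℝ ψ (Set.Icc a b) x :=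
      (hψ.differentiableOn one_ne_zero) x ⟨hx.1.le, hx.2.le⟩
    have hda : DifferentiableAt ℝ ψ x := hdw.differentiableAt hmem
    have heq : derivWithin ψ (Set.Icc a b) x = deriv ψ x := derivWithin_of_mem_nhds hmem
    refine ⟨?_, heq.symm⟩
    show HasDerivAt ψ (derivWithin ψ (Set.Icc a b) x) x
    rw [heq]
    exact hda.hasDerivAt
  have hψm : AEStronglyMeasurable ψ (volume.restrict (Set.Ioo a b)) :=
    (hψc.mono Set.Ioo_subset_Icc_self).aestronglyMeasurable measurableSet_Ioo
  obtain ⟨M, hM⟩ := isCompact_Icc.exists_bound_of_continuousOn hψc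
  have hgψi : IntervalIntegrable (fun x => g x * ψ x) volume a b := by
    rw [intervalIntegrable_iff_integrableOn_Ioo_of_le hab.le]
    refine ⟨hgm.mul hψm, HasFiniteIntegral.restrict_of_bounded (C := M)
        (by simp [Real.volume_Ioo]) ?_⟩
    rw [MeasureTheory.ae_restrict_iff' measurableSet_Ioo]
    apply Filter.Eventually.of_forall
    intro x hx
    rw [norm_mul, hgnorm, one_mul]
    exact hM x ⟨hx.1.le, hx.2.le⟩
  have hFψ'i : IntervalIntegrable (fun x => F x * ψ' x) volume a b := by
    apply ContinuousOn.intervalIntegrable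
    rw [Set.uIcc_of_le hab.le]
    exact hFc.mul hψ'c
  have key : (∫ x in a..b, (g x * ψ x + F x * ψ' x)) = F b * ψ b := by
    have := intervalIntegral.integral_eq_sub_of_hasDerivAt_of_le hab.le
      (hFc.mul hψc)
      (fun x hx => ((hFd x hx).mul (hψd x hx).1))
      (hgψi.add hFψ'i)
    rw [this]
    have hFa : F a = 0 := intervalIntegral.integral_same
    rw [Pi.mul_apply, Pi.mul_apply, hFa, zero_mul, sub_zero]
  have key2 : (∫ x in a..b, g x * ψ x) = F b * ψ b - ∫ x in a..b, F x * ψ' x := by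
    rw [intervalIntegral.integral_add hgψi hFψ'i] at key
    linear_combination key
  have hFψ'bound : ‖∫ x in a..b, F x * ψ' x‖ ≤ 8 * δ * ∫ x in a..b, ‖ψ' x‖ := by
    refine le_trans (intervalIntegral.norm_integral_le_integral_norm hab.le) ?_
    have h1 : (∫ x in a..b, ‖F x * ψ' x‖) ≤ ∫ x in a..b, 8 * δ * ‖ψ' x‖ := by
      apply intervalIntegral.integral_mono_on hab.le
      · apply ContinuousOn.intervalIntegrable
        rw [Set.uIcc_of_le hab.le]
        exact (hFc.mul hψ'c).norm
      · apply ContinuousOn.intervalIntegrable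
        rw [Set.uIcc_of_le hab.le]
        exact continuous_const.continuousOn.mul hψ'c.norm
      · intro x hx
        rw [norm_mul]
        exact mul_le_mul_of_nonneg_right (hFbound x hx) (norm_nonneg _)
    rw [intervalIntegral.integral_const_mul] at h1
    exact h1
  have hcongr : (∫ x in a..b, ‖deriv ψ x‖) = ∫ x in a..b, ‖ψ' x‖ := by
    apply intervalIntegral.integral_congr_ae
    have hb : ∀ᵐ x : ℝ ∂volume, x ≠ b := by
      rw [MeasureTheory.ae_iff]
      simp
    filter_upwards [hb] with x hx hxI
    rw [Set.uIoc_of_le hab.le] at hxI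
    have hxIoo : x ∈ Set.Ioo a b := ⟨hxI.1, lt_of_le_of_ne hxI.2 hx⟩
    rw [(hψd x hxIoo).2]
  calc ‖∫ x in a..b, g x * ψ x‖
      = ‖F b * ψ b - ∫ x in a..b, F x * ψ' x‖ := by rw [key2]
    _ ≤ ‖F b * ψ b‖ + ‖∫ x in a..b, F x * ψ' x‖ := norm_sub_le _ _
    _ ≤ 8*δ * ‖ψ b‖ + 8*δ * ∫ x in a..b, ‖ψ' x‖ := by
        apply add_le_add _ hFψ'bound
        rw [norm_mul]
        exact mul_le_mul_of_nonneg_right (hFbound b ⟨hab.le, le_refl b⟩) (norm_nonneg _)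
    _ = 8 * δ * (‖ψ b‖ + ∫ x in a..b, ‖ψ' x‖) := by ring
    _ = 8 * δ * (‖ψ b‖ + ∫ x in a..b, ‖deriv ψ x‖) := by rw [hcongr]
theorem stmt7 : ∃ c₂ : ℝ, ∀ (a b : ℝ) (φ : ℝ → ℝ) (ψ : ℝ → ℂ), a < b →
    ContDiffOn ℝ (⊤ : ℕ∞) φ (Set.Ioo a b) →
    (∀ x ∈ Set.Ioo a b, 1 ≤ |iteratedDeriv 2 φ x|) →
    ContDiffOn ℝ 1 ψ (Set.Icc a b) →
    ∀ lam : ℝ, 0 < lam →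
      ‖∫ x in a..b, Complex.exp (Complex.I * lam * φ x) * ψ x‖ ≤
        c₂ * lam ^ (-(1 / 2) : ℝ) * (‖ψ b‖ + ∫ x in a..b, ‖deriv ψ x‖) := by
  use 8
  intro a b φ ψ hab hφ h2 hψ lam hlam
  have h2' : ∀ x ∈ Set.Ioo a b, 1 ≤ |deriv (deriv φ) x| := by
    intro x hx
    have := h2 x hx
    rwa [iteratedDeriv_succ, iteratedDeriv_one] at this
  have hφp : ContDiffOn ℝ (⊤ : ℕ∞) (deriv φ) (Set.Ioo a b) := hφ.deriv_of_isOpen isOpen_Ioo (by simp)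
  have hφpp : ContDiffOn ℝ (⊤ : ℕ∞) (deriv (deriv φ)) (Set.Ioo a b) :=
    hφp.deriv_of_isOpen isOpen_Ioo (by simp)
  have hφ'' : ContinuousOn (deriv (deriv φ)) (Set.Ioo a b) := hφpp.continuousOn
  by_cases hpos : ∀ x ∈ Set.Ioo a b, 1 ≤ deriv (deriv φ) x
  · exact vdcCore hab hφ hpos hψ hlam
  · have hneg : ∀ x ∈ Set.Ioo a b, deriv (deriv φ) x ≤ -1 := by
      push_neg at hpos
      obtain ⟨x₀, hx₀, hx₀'⟩ := hpos
      have hx₀neg : deriv (deriv φ) x₀ ≤ -1 := by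
        rcases abs_cases (deriv (deriv φ) x₀) with ⟨h, _⟩ | ⟨h, _⟩ <;>
          [linarith [h2' x₀ hx₀]; linarith [h2' x₀ hx₀]]
      intro y hy
      by_contra hy'
      push_neg at hy'
      have hy1 : 1 ≤ deriv (deriv φ) y := by
        rcases abs_cases (deriv (deriv φ) y) with ⟨h, _⟩ | ⟨h, _⟩ <;>
          [linarith [h2' y hy]; linarith [h2' y hy]]
      have hsubu : Set.uIcc x₀ y ⊆ Set.Ioo a b :=
        (Set.ordConnected_Ioo).uIcc_subset hx₀ hy
      have h0 : (0:ℝ) ∈ Set.uIcc (deriv (deriv φ) x₀) (deriv (deriv φ) y) := by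
        rw [Set.mem_uIcc]
        left
        constructor <;> linarith
      obtain ⟨z, hz, hz0⟩ := intermediate_value_uIcc (hφ''.mono hsubu) h0
      have := h2' z (hsubu hz)
      rw [hz0] at this
      simp at this
      norm_num at this
    have hφneg : ContDiffOn ℝ (⊤ : ℕ∞) (fun x => -φ x) (Set.Ioo a b) := hφ.neg
    have hψc : ContDiffOn ℝ 1 (fun x => (starRingEnd ℂ) (ψ x)) (Set.Icc a b) := by
      exact Complex.conjCLE.toContinuousLinearMap.contDiff.comp_contDiffOn hψ
    have hd2 : ∀ x ∈ Set.Ioo a b, 1 ≤ deriv (deriv (fun x => -φ x)) x := by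
      intro x hx
      have he : deriv (fun x => -φ x) = fun x => -deriv φ x := deriv.neg'
      rw [he, deriv.fun_neg]
      linarith [hneg x hx]
    have hcore := vdcCore hab hφneg hd2 hψc hlam
    have hderiv_conj : ∀ x : ℝ, deriv (fun y => (starRingEnd ℂ) (ψ y)) x
        = (starRingEnd ℂ) (deriv ψ x) := by
      intro x
      have h1 : (fun y => (starRingEnd ℂ) (ψ y)) = (Complex.conjCLE ∘ ψ) := by
        funext y
        rfl
      rw [h1, ← fderiv_apply_one_eq_deriv, Complex.conjCLE.comp_fderiv]
      simp [fderiv_apply_one_eq_deriv]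
    have hconj_int : ∀ (f : ℝ → ℂ) (u v : ℝ),
        (∫ x in u..v, (starRingEnd ℂ) (f x)) = (starRingEnd ℂ) (∫ x in u..v, f x) := by
      intro f u v
      unfold intervalIntegral
      rw [integral_conj, integral_conj, ← map_sub]
    have hpoint : ∀ x : ℝ, Complex.exp (Complex.I * lam * φ x) * ψ x
        = (starRingEnd ℂ) (Complex.exp (Complex.I * lam * ((fun x => -φ x) x : ℝ))
            * (starRingEnd ℂ) (ψ x)) := by
      intro x
      rw [map_mul, Complex.conj_conj]
      congr 1
      rw [← Complex.exp_conj]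
      congr 1
      simp only [map_mul, Complex.conj_I, Complex.conj_ofReal]
      push_cast
      ring
    have hLHS : ‖∫ x in a..b, Complex.exp (Complex.I * lam * φ x) * ψ x‖
        = ‖∫ x in a..b, Complex.exp (Complex.I * lam * ((fun x => -φ x) x : ℝ))
            * (starRingEnd ℂ) (ψ x)‖ := by
      rw [intervalIntegral.integral_congr (g := fun x => (starRingEnd ℂ)
        (Complex.exp (Complex.I * lam * ((fun x => -φ x) x : ℝ)) * (starRingEnd ℂ) (ψ x)))
        (fun x _ => hpoint x)]
      rw [hconj_int]
      exact RCLike.norm_conj _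
    have hRHS : (∫ x in a..b, ‖deriv (fun y => (starRingEnd ℂ) (ψ y)) x‖)
        = ∫ x in a..b, ‖deriv ψ x‖ := by
      apply intervalIntegral.integral_congr
      intro x _
      show ‖deriv (fun y => (starRingEnd ℂ) (ψ y)) x‖ = ‖deriv ψ x‖
      rw [hderiv_conj]
      exact RCLike.norm_conj _
    rw [hLHS]
    have hb' : ‖(starRingEnd ℂ) (ψ b)‖ = ‖ψ b‖ := RCLike.norm_conj _
    calc ‖∫ x in a..b, Complex.exp (Complex.I * lam * ((fun x => -φ x) x : ℝ))
            * (starRingEnd ℂ) (ψ x)‖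
        ≤ 8 * lam ^ (-(1/2) : ℝ) * (‖(starRingEnd ℂ) (ψ b)‖
            + ∫ x in a..b, ‖deriv (fun y => (starRingEnd ℂ) (ψ y)) x‖) := hcore
      _ = 8 * lam ^ (-(1/2) : ℝ) * (‖ψ b‖ + ∫ x in a..b, ‖deriv ψ x‖) := by
          rw [hb', hRHS]
end
end

section
/- Suppose φ: (a,b) → ℝ is smooth with φ' monotonic and |φ'(x)| ≥ 1 on (a,b), and ψ: [a,b] → ℂ is C¹. Then |∫_a^b e^{iλφ(x)} ψ(x) dx| ≤ c₁ λ^{-1} (|ψ(b)| + ∫_a^b |ψ'(x)| dx) for all λ > 0, where c₁ is an absolute constant. -/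
open Set MeasureTheory intervalIntegral Filter Topology

lemma mono_deriv_nonneg {a b : ℝ} {g : ℝ → ℝ} {y x : ℝ}
    (hg : MonotoneOn g (Set.Ioo a b)) (hx : x ∈ Set.Ioo a b) (hd : HasDerivAt g y x) : 0 ≤ y := by
  have h : Filter.Tendsto (slope g x) (𝓝[>] x) (𝓝 y) :=
    (hasDerivAt_iff_tendsto_slope.1 hd).mono_left
      (nhdsWithin_mono x (fun z hz => ne_of_gt hz))
  refine ge_of_tendsto h ?_
  filter_upwards [Ioo_mem_nhdsGT_of_mem (Set.left_mem_Ico.2 hx.2)] with z hz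
  rw [slope_def_field]
  have hzm : z ∈ Set.Ioo a b := ⟨lt_trans hx.1 hz.1, hz.2⟩
  exact div_nonneg (sub_nonneg.2 (hg hx hzm hz.1.le)) (sub_nonneg.2 hz.1.le)

lemma vdc_one (a b : ℝ) (φ : ℝ → ℝ) (hab : a < b)
    (hφ : ContDiffOn ℝ (⊤ : ℕ∞) φ (Set.Ioo a b))
    (hmono : MonotoneOn (deriv φ) (Set.Ioo a b) ∨ AntitoneOn (deriv φ) (Set.Ioo a b))
    (hlb : ∀ x ∈ Set.Ioo a b, 1 ≤ |deriv φ x|)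
    (lam : ℝ) (hlam : 0 < lam) :
    ‖∫ x in a..b, Complex.exp (Complex.I * lam * φ x)‖ ≤ 4 * lam⁻¹ := by
  set e : ℝ → ℂ := fun x => Complex.exp (Complex.I * lam * φ x) with he
  have hnorm : ∀ x : ℝ, ‖e x‖ = 1 := by
    intro x
    rw [he]
    simp [Complex.norm_exp]
  -- continuity
  have hφc : ContinuousOn φ (Set.Ioo a b) := hφ.continuousOn
  have he_cont : ContinuousOn e (Set.Ioo a b) := by
    apply Complex.continuous_exp.comp_continuousOn
    exact continuousOn_const.mul (Complex.continuous_ofReal.comp_continuousOn hφc)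
  -- integrability
  have hint_Ioo : IntegrableOn e (Set.Ioo a b) := by
    refine Integrable.mono' (g := fun _ => (1:ℝ)) ?_
      (he_cont.aestronglyMeasurable measurableSet_Ioo) ?_
    · exact integrableOn_const (by simp [Real.volume_Ioo]) (by simp)
    · filter_upwards with x using le_of_eq (hnorm x)
  have h0 : IntegrableOn e (Set.Ioc a b) := hint_Ioo.congr_set_ae Ioo_ae_eq_Ioc.symm
  have hIcd : ∀ c d : ℝ, a ≤ c → c ≤ d → d ≤ b → IntervalIntegrable e volume c d :=
    fun c d h1 h2 h3 => (intervalIntegrable_iff_integrableOn_Ioc_of_le h2).2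
      (h0.mono_set (Set.Ioc_subset_Ioc h1 h3))

  -- derivatives
  have hφ' : ContDiffOn ℝ (⊤ : ℕ∞) (deriv φ) (Set.Ioo a b) := hφ.deriv_of_isOpen isOpen_Ioo (by simp)
  have hφ'' : ContDiffOn ℝ (⊤ : ℕ∞) (deriv (deriv φ)) (Set.Ioo a b) := hφ'.deriv_of_isOpen isOpen_Ioo (by simp)
  have hd1 : ∀ x ∈ Set.Ioo a b, HasDerivAt φ (deriv φ x) x := fun x hx =>
    ((hφ.differentiableOn (by simp)).differentiableAt (isOpen_Ioo.mem_nhds hx)).hasDerivAt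
  have hd2 : ∀ x ∈ Set.Ioo a b, HasDerivAt (deriv φ) (deriv (deriv φ) x) x := fun x hx =>
    ((hφ'.differentiableOn (by simp)).differentiableAt (isOpen_Ioo.mem_nhds hx)).hasDerivAt
  have hne : ∀ x ∈ Set.Ioo a b, deriv φ x ≠ 0 := by
    intro x hx h
    have := hlb x hx; rw [h] at this; norm_num at this
  have hzne : ∀ x ∈ Set.Ioo a b, (Complex.I * lam * ((deriv φ x : ℝ) : ℂ)) ≠ 0 := by
    intro x hx
    exact mul_ne_zero (mul_ne_zero Complex.I_ne_zero
      (Complex.ofReal_ne_zero.2 hlam.ne')) (Complex.ofReal_ne_zero.2 (hne x hx))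
  have hznorm : ∀ x ∈ Set.Ioo a b, ‖Complex.I * lam * ((deriv φ x : ℝ) : ℂ)‖ = lam * |deriv φ x| := by
    intro x hx
    simp [map_mul, abs_of_pos hlam]
  -- sign of second derivative
  obtain ⟨s, hs1, hs2⟩ : ∃ s : ℝ, |s| = 1 ∧ ∀ x ∈ Set.Ioo a b, 0 ≤ s * deriv (deriv φ) x := by
    rcases hmono with hm | hm
    · exact ⟨1, abs_one, fun x hx => by simpa using mono_deriv_nonneg hm hx (hd2 x hx)⟩
    · refine ⟨-1, by norm_num, fun x hx => ?_⟩
      have hmn : MonotoneOn (fun y => -deriv φ y) (Set.Ioo a b) :=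
        fun u hu v hv huv => neg_le_neg (hm hu hv huv)
      have h' := mono_deriv_nonneg hmn hx ((hd2 x hx).neg)
      linarith
  -- key estimate on compact subintervals
  have key : ∀ c d : ℝ, a < c → c ≤ d → d < b → ‖∫ x in c..d, e x‖ ≤ 4 * lam⁻¹ := by
    intro c d hc hcd hd
    have hsub : Set.uIcc c d ⊆ Set.Ioo a b := by
      rw [Set.uIcc_of_le hcd]; exact Set.Icc_subset_Ioo hc hd
    set g : ℝ → ℂ := fun x => (Complex.I * lam * ((deriv φ x : ℝ) : ℂ))⁻¹ with hgdef
    set g' : ℝ → ℂ := fun x =>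
      -(Complex.I * lam * ((deriv (deriv φ) x : ℝ) : ℂ)) / (Complex.I * lam * ((deriv φ x : ℝ) : ℂ))^2
      with hg'def
    have he_deriv : ∀ x ∈ Set.Ioo a b,
        HasDerivAt e (e x * (Complex.I * lam * ((deriv φ x : ℝ) : ℂ))) x := by
      intro x hx
      exact (((hd1 x hx).ofReal_comp).const_mul (Complex.I * lam)).cexp
    have hg_deriv : ∀ x ∈ Set.Ioo a b, HasDerivAt g (g' x) x := by
      intro x hx
      have hbase : HasDerivAt (fun y => Complex.I * lam * ((deriv φ y : ℝ) : ℂ))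
          (Complex.I * lam * ((deriv (deriv φ) x : ℝ) : ℂ)) x :=
        ((hd2 x hx).ofReal_comp).const_mul (Complex.I * lam)
      have hinv := (hasDerivAt_inv (hzne x hx)).comp x hbase
      have hval : g' x = -((Complex.I * ↑lam * ((deriv φ x : ℝ) : ℂ))^2)⁻¹ *
          (Complex.I * ↑lam * ((deriv (deriv φ) x : ℝ) : ℂ)) := by
        rw [hg'def]; ring
      rw [hval]
      exact hinv
    have hG_deriv : ∀ x ∈ Set.uIcc c d,
        HasDerivAt (fun y => g y * e y) (g' x * e x + e x) x := by
      intro x hx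
      have hx' := hsub hx
      have h := (hg_deriv x hx').mul (he_deriv x hx')
      have hz1 : (Complex.I * ↑lam * ((deriv φ x : ℝ) : ℂ))⁻¹ *
          (Complex.I * ↑lam * ((deriv φ x : ℝ) : ℂ)) = 1 := inv_mul_cancel₀ (hzne x hx')
      have heq : g x * (e x * (Complex.I * lam * ((deriv φ x : ℝ) : ℂ))) = e x := by
        show (Complex.I * ↑lam * ((deriv φ x : ℝ) : ℂ))⁻¹ *
          (e x * (Complex.I * ↑lam * ((deriv φ x : ℝ) : ℂ))) = e x
        rw [mul_comm (e x), ← mul_assoc, hz1, one_mul]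
      rwa [heq] at h
    have hcont_g'e : ContinuousOn (fun x => g' x * e x) (Set.Ioo a b) := by
      apply ContinuousOn.mul _ he_cont
      apply ContinuousOn.div
      · exact (continuousOn_const.mul
          (Complex.continuous_ofReal.comp_continuousOn hφ''.continuousOn)).neg
      · exact (continuousOn_const.mul
          (Complex.continuous_ofReal.comp_continuousOn hφ'.continuousOn)).pow 2
      · intro x hx; exact pow_ne_zero 2 (hzne x hx)
    have hi1 : IntervalIntegrable (fun x => g' x * e x) volume c d :=
      (hcont_g'e.mono hsub).intervalIntegrable
    have hi2 : IntervalIntegrable e volume c d :=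
      hIcd c d (hsub (Set.left_mem_uIcc)).1.le hcd (hsub (Set.right_mem_uIcc)).2.le
    have ftc : (∫ x in c..d, (g' x * e x + e x)) = g d * e d - g c * e c :=
      intervalIntegral.integral_eq_sub_of_hasDerivAt hG_deriv (hi1.add hi2)
    have hsplit : (∫ x in c..d, e x) = (g d * e d - g c * e c) - ∫ x in c..d, g' x * e x := by
      rw [← ftc, intervalIntegral.integral_add hi1 hi2]; ring
    -- bound for g
    have hgnorm : ∀ x ∈ Set.Ioo a b, ‖g x‖ ≤ lam⁻¹ := by
      intro x hx
      rw [hgdef]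
      simp only [norm_inv]
      rw [hznorm x hx]
      have h1 : lam ≤ lam * |deriv φ x| := by nlinarith [hlb x hx]
      rw [inv_le_inv₀ (lt_of_lt_of_le hlam h1) hlam]
      exact h1
    -- the variation integral
    have hreal : ∀ x ∈ Set.uIcc c d,
        ‖g' x * e x‖ = lam⁻¹ * ((-s) * (-(deriv (deriv φ) x) / (deriv φ x)^2)) := by
      intro x hx
      have hx' := hsub hx
      rw [norm_mul, hnorm, mul_one, hg'def]
      simp only [norm_div, norm_neg, norm_pow]
      rw [hznorm x hx']
      have h1 : ‖Complex.I * lam * ((deriv (deriv φ) x : ℝ) : ℂ)‖ = lam * |deriv (deriv φ) x| := by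
        simp [map_mul, abs_of_pos hlam]
      rw [h1]
      have h2 : s * deriv (deriv φ) x = |deriv (deriv φ) x| := by
        have := hs2 x hx'
        rcases abs_eq (by norm_num : (0:ℝ) ≤ 1) |>.1 hs1 with h | h
        · rw [h, one_mul] at this ⊢; exact (abs_of_nonneg this).symm
        · rw [h] at this ⊢
          simp only [neg_one_mul] at this ⊢
          rw [abs_of_nonpos (by linarith)]
      have hne2 : deriv φ x ≠ 0 := hne x hx'
      have h3 : -s * (-(deriv (deriv φ) x) / (deriv φ x)^2)
          = |deriv (deriv φ) x| / (deriv φ x)^2 := by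
        rw [← h2]; ring
      rw [h3, mul_pow, sq_abs]
      field_simp
    have hftc2 : (∫ x in c..d, -(deriv (deriv φ) x) / (deriv φ x)^2)
        = (deriv φ d)⁻¹ - (deriv φ c)⁻¹ := by
      apply intervalIntegral.integral_eq_sub_of_hasDerivAt
      · intro x hx
        have hx' := hsub hx
        have := (hd2 x hx').inv (hne x hx')
        exact this
      · apply ContinuousOn.intervalIntegrable
        apply ContinuousOn.mono _ hsub
        apply ContinuousOn.div hφ''.continuousOn.neg (hφ'.continuousOn.pow 2)
        intro x hx; exact pow_ne_zero 2 (hne x hx)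
    have hvar : (∫ x in c..d, ‖g' x * e x‖) ≤ lam⁻¹ * 2 := by
      rw [intervalIntegral.integral_congr hreal, intervalIntegral.integral_const_mul,
        intervalIntegral.integral_const_mul, hftc2]
      have h1 : |(deriv φ d)⁻¹| ≤ 1 := by
        rw [abs_inv]
        have := hlb d (hsub Set.right_mem_uIcc)
        exact inv_le_one_of_one_le₀ this
      have h2 : |(deriv φ c)⁻¹| ≤ 1 := by
        rw [abs_inv]
        exact inv_le_one_of_one_le₀ (hlb c (hsub Set.left_mem_uIcc))
      have : (-s) * ((deriv φ d)⁻¹ - (deriv φ c)⁻¹) ≤ 2 := by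
        have habs : |(-s) * ((deriv φ d)⁻¹ - (deriv φ c)⁻¹)| ≤ 2 := by
          rw [abs_mul, abs_neg, hs1, one_mul]
          calc |(deriv φ d)⁻¹ - (deriv φ c)⁻¹| ≤ |(deriv φ d)⁻¹| + |(deriv φ c)⁻¹| :=
            abs_sub _ _
          _ ≤ 2 := by linarith
        exact le_trans (le_abs_self _) habs
      have hl : (0:ℝ) ≤ lam⁻¹ := by positivity
      nlinarith
    calc ‖∫ x in c..d, e x‖
        ≤ ‖g d * e d‖ + ‖g c * e c‖ + ‖∫ x in c..d, g' x * e x‖ := by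
          rw [hsplit]
          refine le_trans (norm_sub_le _ _) ?_
          gcongr
          exact norm_sub_le _ _
      _ ≤ lam⁻¹ + lam⁻¹ + lam⁻¹ * 2 := by
          gcongr
          · rw [norm_mul, hnorm, mul_one]
            exact hgnorm d (hsub Set.right_mem_uIcc)
          · rw [norm_mul, hnorm, mul_one]
            exact hgnorm c (hsub Set.left_mem_uIcc)
          · exact le_trans (intervalIntegral.norm_integral_le_integral_norm hcd) hvar
      _ = 4 * lam⁻¹ := by ring
  -- limit argument
  refine le_of_forall_pos_le_add ?_
  intro ε hε
  set δ := min (ε/2) ((b-a)/4) with hδdef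
  have hδpos : 0 < δ := lt_min (by linarith) (by linarith)
  have hδlt : δ < (b-a)/2 := lt_of_le_of_lt (min_le_right _ _) (by linarith)
  set c := a + δ with hcdef
  set d := b - δ with hddef
  have hac : a < c := by simp [hcdef]; linarith
  have hcd : c ≤ d := by simp [hcdef, hddef]; linarith
  have hdb : d < b := by simp [hddef]; linarith
  have i1 : IntervalIntegrable e volume a c := hIcd a c le_rfl hac.le (by linarith)
  have i2 : IntervalIntegrable e volume c d := hIcd c d hac.le hcd hdb.le
  have i3 : IntervalIntegrable e volume d b := hIcd d b (by linarith) hdb.le le_rfl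
  have hsplit : (∫ x in a..b, e x) = (∫ x in a..c, e x) + (∫ x in c..d, e x)
      + (∫ x in d..b, e x) := by
    rw [add_assoc, intervalIntegral.integral_add_adjacent_intervals i2 i3,
      intervalIntegral.integral_add_adjacent_intervals i1 (i2.trans i3)]
  have b1 : ‖∫ x in a..c, e x‖ ≤ δ := by
    calc ‖∫ x in a..c, e x‖ ≤ 1 * |c - a| :=
          intervalIntegral.norm_integral_le_of_norm_le_const (fun x _ => le_of_eq (hnorm x))
      _ = δ := by rw [one_mul, hcdef]; simp [abs_of_nonneg hδpos.le]
  have b3 : ‖∫ x in d..b, e x‖ ≤ δ := by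
    calc ‖∫ x in d..b, e x‖ ≤ 1 * |b - d| :=
          intervalIntegral.norm_integral_le_of_norm_le_const (fun x _ => le_of_eq (hnorm x))
      _ = δ := by rw [one_mul, hddef]; simp [abs_of_nonneg hδpos.le]
  have b2 := key c d hac hcd hdb
  calc ‖∫ x in a..b, e x‖ ≤ δ + (4 * lam⁻¹) + δ := by
        rw [hsplit]
        refine le_trans (norm_add_le _ _) ?_
        gcongr
        exact le_trans (norm_add_le _ _) (by gcongr)
    _ ≤ 4 * lam⁻¹ + ε := by
        have : δ ≤ ε/2 := min_le_left _ _
        linarith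


theorem stmt8 : ∃ c₁ : ℝ, ∀ (a b : ℝ) (φ : ℝ → ℝ) (ψ : ℝ → ℂ), a < b →
    ContDiffOn ℝ (⊤ : ℕ∞) φ (Set.Ioo a b) →
    (MonotoneOn (deriv φ) (Set.Ioo a b) ∨ AntitoneOn (deriv φ) (Set.Ioo a b)) →
    (∀ x ∈ Set.Ioo a b, 1 ≤ |deriv φ x|) →
    ContDiffOn ℝ 1 ψ (Set.Icc a b) →
    ∀ lam : ℝ, 0 < lam →
      ‖∫ x in a..b, Complex.exp (Complex.I * lam * φ x) * ψ x‖ ≤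
        c₁ * lam⁻¹ * (‖ψ b‖ + ∫ x in a..b, ‖deriv ψ x‖) := by
  refine ⟨4, ?_⟩
  intro a b φ ψ hab hφ hmono hlb hψ lam hlam
  set e : ℝ → ℂ := fun x => Complex.exp (Complex.I * lam * φ x) with he
  have hnorm : ∀ x : ℝ, ‖e x‖ = 1 := by
    intro x
    rw [he]
    simp [Complex.norm_exp]
  have hφc : ContinuousOn φ (Set.Ioo a b) := hφ.continuousOn
  have he_cont : ContinuousOn e (Set.Ioo a b) := by
    apply Complex.continuous_exp.comp_continuousOn
    exact continuousOn_const.mul (Complex.continuous_ofReal.comp_continuousOn hφc)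
  have hint_Ioo : IntegrableOn e (Set.Ioo a b) := by
    refine Integrable.mono' (g := fun _ => (1:ℝ)) ?_
      (he_cont.aestronglyMeasurable measurableSet_Ioo) ?_
    · exact integrableOn_const (by simp [Real.volume_Ioo]) (by simp)
    · filter_upwards with x using le_of_eq (hnorm x)
  have h0 : IntegrableOn e (Set.Ioc a b) := hint_Ioo.congr_set_ae Ioo_ae_eq_Ioc.symm
  have hIcd : ∀ c d : ℝ, a ≤ c → c ≤ d → d ≤ b → IntervalIntegrable e volume c d :=
    fun c d h1 h2 h3 => (intervalIntegrable_iff_integrableOn_Ioc_of_le h2).2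
      (h0.mono_set (Set.Ioc_subset_Ioc h1 h3))
  -- the primitive
  set F : ℝ → ℂ := fun t => ∫ x in a..t, e x with hF
  have hFnorm : ∀ t ∈ Set.Icc a b, ‖F t‖ ≤ 4 * lam⁻¹ := by
    intro t ht
    rcases eq_or_lt_of_le ht.1 with rfl | hat
    · rw [hF]
      simp only [intervalIntegral.integral_same, norm_zero]
      positivity
    · have hsub : Set.Ioo a t ⊆ Set.Ioo a b := Set.Ioo_subset_Ioo le_rfl ht.2
      refine vdc_one a t φ hat (hφ.mono hsub) ?_ (fun x hx => hlb x (hsub hx)) lam hlam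
      rcases hmono with hm | hm
      · exact Or.inl (hm.mono hsub)
      · exact Or.inr (hm.mono hsub)
  have hIcc_int : IntegrableOn e (Set.uIcc a b) := by
    rw [Set.uIcc_of_le hab.le]
    exact h0.congr_set_ae Ioc_ae_eq_Icc.symm
  have hF_cont : ContinuousOn F (Set.Icc a b) := by
    rw [← Set.uIcc_of_le hab.le]
    exact intervalIntegral.continuousOn_primitive_interval hIcc_int
  have hF_deriv : ∀ x ∈ Set.Ioo a b, HasDerivAt F (e x) x := by
    intro x hx
    exact intervalIntegral.integral_hasDerivAt_right
      (hIcd a x le_rfl hx.1.le hx.2.le)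
      (he_cont.stronglyMeasurableAtFilter isOpen_Ioo x hx)
      (he_cont.continuousAt (isOpen_Ioo.mem_nhds hx))
  -- the derivative of ψ
  set g' : ℝ → ℂ := fun x => derivWithin ψ (Set.Icc a b) x with hg'
  have hg'c : ContinuousOn g' (Set.Icc a b) := by
    rw [hg']
    exact hψ.continuousOn_derivWithin (uniqueDiffOn_Icc hab) le_rfl
  have hψc : ContinuousOn ψ (Set.Icc a b) := hψ.continuousOn
  have hψdAt : ∀ x ∈ Set.Ioo a b, HasDerivAt ψ (g' x) x := by
    intro x hx
    have h1 : HasDerivWithinAt ψ (g' x) (Set.Icc a b) x :=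
      ((hψ.differentiableOn one_ne_zero) x (Set.Ioo_subset_Icc_self hx)).hasDerivWithinAt
    exact h1.hasDerivAt (Icc_mem_nhds hx.1 hx.2)
  have hderiv_eq : ∀ x ∈ Set.Ioo a b, deriv ψ x = g' x := fun x hx => (hψdAt x hx).deriv
  -- integrability of the two integrands
  have hψ_int : IntegrableOn ψ (Set.Ioc a b) :=
    (hψc.integrableOn_Icc).mono_set Set.Ioc_subset_Icc_self
  have heψ_int : IntervalIntegrable (fun x => e x * ψ x) volume a b := by
    rw [intervalIntegrable_iff_integrableOn_Ioc_of_le hab.le]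
    exact Integrable.bdd_mul hψ_int h0.aestronglyMeasurable (Filter.Eventually.of_forall fun x => le_of_eq (hnorm x))
  have hFg'_cont : ContinuousOn (fun x => F x * g' x) (Set.Icc a b) := hF_cont.mul hg'c
  have hFg'_int : IntervalIntegrable (fun x => F x * g' x) volume a b := by
    apply ContinuousOn.intervalIntegrable
    rwa [Set.uIcc_of_le hab.le]
  have hH_cont : ContinuousOn (fun t => F t * ψ t) (Set.Icc a b) := hF_cont.mul hψc
  have ftc : (∫ x in a..b, (e x * ψ x + F x * g' x)) = F b * ψ b - F a * ψ a := by
    apply intervalIntegral.integral_eq_sub_of_hasDeriv_right_of_le hab.le hH_cont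
    · intro x hx
      exact ((hF_deriv x hx).mul (hψdAt x hx)).hasDerivWithinAt
    · exact heψ_int.add hFg'_int
  have hFa : F a = 0 := intervalIntegral.integral_same
  have hsplit : (∫ x in a..b, e x * ψ x) = F b * ψ b - ∫ x in a..b, F x * g' x := by
    rw [intervalIntegral.integral_add heψ_int hFg'_int, hFa, zero_mul, sub_zero] at ftc
    linear_combination ftc
  have hae : ∀ᵐ x ∂(volume : Measure ℝ), x ∈ Set.uIoc a b → ‖deriv ψ x‖ = ‖g' x‖ := by
    have hb : ∀ᵐ x ∂(volume : Measure ℝ), x ≠ b := by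
      refine MeasureTheory.ae_iff.mpr ?_
      have hset : {x : ℝ | ¬ x ≠ b} = {b} := by ext x; simp
      rw [hset, Real.volume_singleton]
    filter_upwards [hb] with x hxb hxI
    rw [Set.uIoc_of_le hab.le] at hxI
    have hxo : x ∈ Set.Ioo a b := ⟨hxI.1, lt_of_le_of_ne hxI.2 hxb⟩
    rw [hderiv_eq x hxo]
  have hcongr : (∫ x in a..b, ‖deriv ψ x‖) = ∫ x in a..b, ‖g' x‖ :=
    intervalIntegral.integral_congr_ae hae
  have hg'n_int : IntervalIntegrable (fun x => ‖g' x‖) volume a b := by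
    apply ContinuousOn.intervalIntegrable
    rw [Set.uIcc_of_le hab.le]; exact hg'c.norm
  have hFg'n_int : IntervalIntegrable (fun x => ‖F x * g' x‖) volume a b := by
    apply ContinuousOn.intervalIntegrable
    rw [Set.uIcc_of_le hab.le]; exact hFg'_cont.norm
  have hmono_int : (∫ x in a..b, ‖F x * g' x‖) ≤ ∫ x in a..b, (4*lam⁻¹) * ‖g' x‖ := by
    apply intervalIntegral.integral_mono_on hab.le hFg'n_int (hg'n_int.const_mul _)
    intro x hx
    rw [norm_mul]
    exact mul_le_mul_of_nonneg_right (hFnorm x hx) (norm_nonneg _)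
  rw [hcongr]
  calc ‖∫ x in a..b, e x * ψ x‖ ≤ ‖F b * ψ b‖ + ‖∫ x in a..b, F x * g' x‖ := by
        rw [hsplit]; exact norm_sub_le _ _
    _ ≤ 4*lam⁻¹*‖ψ b‖ + ∫ x in a..b, ‖F x * g' x‖ := by
        gcongr
        · rw [norm_mul]
          exact mul_le_mul_of_nonneg_right (hFnorm b ⟨hab.le, le_rfl⟩) (norm_nonneg _)
        · exact intervalIntegral.norm_integral_le_integral_norm hab.le
    _ ≤ 4*lam⁻¹*‖ψ b‖ + ∫ x in a..b, (4*lam⁻¹) * ‖g' x‖ := by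
        exact add_le_add le_rfl hmono_int
    _ = 4 * lam⁻¹ * (‖ψ b‖ + ∫ x in a..b, ‖g' x‖) := by
        rw [intervalIntegral.integral_const_mul]; ring
end
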